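/- arXiv:0805.1583 — 5 statements merged into one kernel-verified Lean document; each statement's English description precedes it below -/
import Mathlib

section
/- For a group G and maximal linked systems A, B on G, the family A * B = {S ⊆ G : {x ∈ G : x⁻¹S ∈ B} ∈ A}, where x⁻¹S = {z ∈ G : x·z ∈ S}, is again a maximal linked system on G. -/
def Linked {X : Type*} (L : Set (Set X)) : Prop :=
  ∀ A ∈ L, ∀ B ∈ L, (A ∩ B).Nonempty

def MaxLinked {X : Type*} (L : Set (Set X)) : Prop :=
  Linked L ∧ ∀ L' : Set (Set X), Linked L' → L ⊆ L' → L' = L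

def perp {X : Type*} (L : Set (Set X)) : Set (Set X) :=
  {A | ∀ F ∈ L, (A ∩ F).Nonempty}

def conv {G : Type*} [Group G] (A B : Set (Set G)) : Set (Set G) :=
  {S | {x : G | {z : G | x * z ∈ S} ∈ B} ∈ A}

def Invariant {G : Type*} [Group G] (L : Set (Set G)) : Prop :=
  ∀ x : G, (fun A => (fun a => x * a) '' A) '' L = L

def MaxInvLinked {G : Type*} [Group G] (L : Set (Set G)) : Prop :=
  Linked L ∧ Invariant L ∧
    ∀ L' : Set (Set G), Linked L' → Invariant L' → L ⊆ L' → L' = L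

/-! A maximal linked system `L` on a nonempty set contains exactly one of `S` and `Sᶜ` for every
`S`, and conversely a linked family with this property is maximal. For `conv A B` the dichotomy
is inherited: complementing `S` complements each translate `{z | x * z ∈ S}`, so the set of `x`
whose translate lies in `B` is complemented as well, and `A` contains it or its complement. -/

namespace Linked

variable {X : Type*} {L : Set (Set X)}

lemma compl_notMem (hL : Linked L) {S : Set X} (hS : S ∈ L) : Sᶜ ∉ L := fun hc => by
  simpa using hL S hS Sᶜ hc

lemma conv {G : Type*} [Group G] {A B : Set (Set G)} (hA : Linked A) (hB : Linked B) :
    Linked (conv A B) := by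
  intro S hS T hT
  obtain ⟨x, hxS, hxT⟩ := hA _ hS _ hT
  obtain ⟨z, hzS, hzT⟩ := hB _ hxS _ hxT
  exact ⟨x * z, hzS, hzT⟩

lemma maxLinked_of_mem_or_compl_mem (hL : Linked L) (h : ∀ S : Set X, S ∈ L ∨ Sᶜ ∈ L) :
    MaxLinked L := by
  refine ⟨hL, fun L' hL' hsub => Set.Subset.antisymm (fun S hS => ?_) hsub⟩
  refine (h S).resolve_right fun hc => ?_
  exact hL'.compl_notMem hS (hsub hc)

end Linked

namespace MaxLinked

variable {X : Type*} {L : Set (Set X)}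

lemma mem_of_forall_inter_nonempty (hL : MaxLinked L) {S : Set X} (hS : S.Nonempty)
    (h : ∀ F ∈ L, (S ∩ F).Nonempty) : S ∈ L := by
  have hlink : Linked (insert S L) := by
    rintro P (rfl | hP) Q (rfl | hQ)
    · simpa using hS
    · exact h Q hQ
    · simpa [Set.inter_comm] using h P hP
    · exact hL.1 P hP Q hQ
  rw [← hL.2 _ hlink (Set.subset_insert _ _)]
  exact Set.mem_insert _ _

lemma univ_mem [Nonempty X] (hL : MaxLinked L) : Set.univ ∈ L :=
  hL.mem_of_forall_inter_nonempty Set.univ_nonempty fun F hF => by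
    simpa using hL.1 F hF F hF

lemma mem_iff_forall_inter_nonempty [Nonempty X] (hL : MaxLinked L) {S : Set X} :
    S ∈ L ↔ ∀ F ∈ L, (S ∩ F).Nonempty := by
  refine ⟨fun hS F hF => hL.1 S hS F hF, fun h => ?_⟩
  have hS : S.Nonempty := by simpa using h _ hL.univ_mem
  exact hL.mem_of_forall_inter_nonempty hS h

-- A member of `L` disjoint from `S` lies in `Sᶜ`, one disjoint from `Sᶜ` lies in `S`; these two
-- members cannot meet.
lemma mem_or_compl_mem [Nonempty X] (hL : MaxLinked L) (S : Set X) : S ∈ L ∨ Sᶜ ∈ L := by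
  by_contra! h
  obtain ⟨F, hF, hSF⟩ := not_forall₂.1 (mt hL.mem_iff_forall_inter_nonempty.2 h.1)
  obtain ⟨F', hF', hSF'⟩ := not_forall₂.1 (mt hL.mem_iff_forall_inter_nonempty.2 h.2)
  obtain ⟨x, hxF, hxF'⟩ := hL.1 F hF F' hF'
  by_cases hx : x ∈ S
  · exact hSF ⟨x, hx, hxF⟩
  · exact hSF' ⟨x, hx, hxF'⟩

lemma compl_mem_iff [Nonempty X] (hL : MaxLinked L) {S : Set X} : Sᶜ ∈ L ↔ S ∉ L :=
  ⟨fun hc hS => hL.1.compl_notMem hS hc, (hL.mem_or_compl_mem S).resolve_left⟩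

end MaxLinked

lemma compl_mem_conv_iff {G : Type*} [Group G] {A B : Set (Set G)} (hB : MaxLinked B)
    {S : Set G} : Sᶜ ∈ conv A B ↔ {x : G | {z : G | x * z ∈ S} ∈ B}ᶜ ∈ A := by
  have : {x : G | {z : G | x * z ∈ Sᶜ} ∈ B} = {x : G | {z : G | x * z ∈ S} ∈ B}ᶜ := by
    ext x
    exact hB.compl_mem_iff
  simp only [conv, Set.mem_ofPred_eq, this]

theorem conv_maxLinked {G : Type*} [Group G] {A B : Set (Set G)}
    (hA : MaxLinked A) (hB : MaxLinked B) : MaxLinked (conv A B) := by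
  refine (hA.1.conv hB.1).maxLinked_of_mem_or_compl_mem fun S => ?_
  rcases hA.mem_or_compl_mem {x : G | {z : G | x * z ∈ S} ∈ B} with h | h
  · exact Or.inl h
  · exact Or.inr (compl_mem_conv_iff hB |>.2 h)
end

section
/- A group G admits an invariant maximal linked system if and only if every element of G has odd order. -/
/-! If `g` has even or infinite order, colouring each right coset `⟨g⟩x` by the parity of the
exponent gives a set `A` with `gA = Aᶜ`; a maximal linked system contains `A` or `Aᶜ`, so an
invariant one would contain both.

Conversely, take a maximal invariant linked system `L` (Zorn). If neither `A` nor `Aᶜ` lies in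
`L`, maximality yields `u, v` with `A ∩ uA = ∅` and `Aᶜ ∩ vAᶜ = ∅`. Then `uA ⊆ Aᶜ ⊆ vA`, so
`v⁻¹u`, having finite order, maps `A` onto itself and `uA = Aᶜ`. This is impossible for `u` of
odd order: `u` is a power of `u²`, which fixes `A`. Hence `L` contains `A` or `Aᶜ` for every
`A`, which makes it maximal linked. -/

open scoped Pointwise

theorem Linked.union {X : Type*} {L M : Set (Set X)} (hL : Linked L) (hM : Linked M)
    (hLM : ∀ A ∈ L, ∀ B ∈ M, (A ∩ B).Nonempty) : Linked (L ∪ M) := by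
  rintro A (hA | hA) B (hB | hB)
  · exact hL A hA B hB
  · exact hLM A hA B hB
  · exact Set.inter_comm A B ▸ hLM B hB A hA
  · exact hM A hA B hB

theorem Linked.compl_notMem_s8 {X : Type*} {L : Set (Set X)} (hL : Linked L) {A : Set X}
    (hA : A ∈ L) : Aᶜ ∉ L := fun hAc => by
  simpa using hL A hA Aᶜ hAc

section MaxLinked

variable {X : Type*} [Nonempty X] {L : Set (Set X)}

theorem MaxLinked.nonempty (hL : MaxLinked L) : L.Nonempty := by
  rw [Set.nonempty_iff_ne_empty]
  rintro rfl
  have hU : Linked ({Set.univ} : Set (Set X)) := by simp [Linked]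
  simpa using hL.2 _ hU (Set.empty_subset _)

theorem MaxLinked.mem_of_mem_perp (hL : MaxLinked L) {A : Set X} (hA : A ∈ perp L) : A ∈ L := by
  obtain ⟨F, hF⟩ := hL.nonempty
  have hAA : Linked ({A} : Set (Set X)) := by
    simpa [Linked] using (hA F hF).mono Set.inter_subset_left
  have hlinked : Linked ({A} ∪ L) := hAA.union hL.1 fun B hB => Set.mem_singleton_iff.1 hB ▸ hA
  rw [← hL.2 _ hlinked Set.subset_union_right]
  exact Or.inl rfl

theorem maxLinked_iff : MaxLinked L ↔ Linked L ∧ ∀ A : Set X, A ∈ L ∨ Aᶜ ∈ L := by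
  refine ⟨fun hL => ⟨hL.1, fun A => or_iff_not_imp_left.2 fun hA => ?_⟩,
    fun ⟨hL, h⟩ => ?_⟩
  · obtain ⟨E, hE, hAE⟩ : ∃ E ∈ L, ¬(A ∩ E).Nonempty := by
      by_contra! h
      exact hA (hL.mem_of_mem_perp h)
    refine hL.mem_of_mem_perp fun F hF => ?_
    obtain ⟨x, hxE, hxF⟩ := hL.1 E hE F hF
    exact ⟨x, fun hxA => hAE ⟨x, hxA, hxE⟩, hxF⟩
  · refine ⟨hL, fun L' hL' hLL' => (Set.Subset.antisymm ?_ hLL')⟩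
    exact fun A hA => (h A).resolve_right fun hAc => hL'.compl_notMem_s8 hA (hLL' hAc)

end MaxLinked

section Action

variable {G α : Type*} [Group G] [MulAction G α] {A : Set α}

theorem smul_set_eq_of_smul_set_subset {s : G} (hs : IsOfFinOrder s) (h : s • A ⊆ A) :
    s • A = A := by
  have hpow : ∀ n : ℕ, s ^ n • A ⊆ A := by
    intro n
    induction n with
    | zero => simp
    | succ n ih => rw [pow_succ, mul_smul]; exact (Set.smul_set_mono h).trans ih
  obtain ⟨n, hn⟩ := hs.mem_powers_iff_mem_zpowers.2 (inv_mem (Subgroup.mem_zpowers s))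
  refine h.antisymm (Set.subset_smul_set_iff.2 ?_)
  rw [← hn]
  exact hpow n

theorem smul_set_eq_compl_of_disjoint {u v : G} (huv : IsOfFinOrder (v⁻¹ * u))
    (hu : Disjoint A (u • A)) (hv : Disjoint Aᶜ (v • Aᶜ)) : u • A = Aᶜ := by
  have huA : u • A ⊆ Aᶜ := hu.subset_compl_left
  have hvA : Aᶜ ⊆ v • A := by simpa [Set.smul_set_compl] using hv.subset_compl_right
  have heq : u • A = v • A := by
    have h := smul_set_eq_of_smul_set_subset (A := A) huv
      (by rw [mul_smul, ← Set.subset_smul_set_iff]; exact huA.trans hvA)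
    rwa [mul_smul, inv_smul_eq_iff] at h
  exact huA.antisymm (heq ▸ hvA)

theorem smul_set_ne_compl_of_odd_orderOf [Nonempty α] {u : G} (hu : Odd (orderOf u))
    (A : Set α) : u • A ≠ Aᶜ := by
  intro h
  have hsq : u ^ 2 ∈ MulAction.stabilizer G A := by
    rw [MulAction.mem_stabilizer_iff, sq, mul_smul, h, Set.smul_set_compl, h, compl_compl]
  obtain ⟨m, hm⟩ := hu
  have hu_eq : (u ^ 2) ^ (m + 1) = u := by
    rw [← pow_mul, show 2 * (m + 1) = orderOf u + 1 by omega, pow_succ, pow_orderOf_eq_one,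
      one_mul]
  have hA : u • A = A := MulAction.mem_stabilizer_iff.1 (hu_eq ▸ pow_mem hsq _)
  exact ne_compl_self (hA ▸ h)

end Action

theorem exists_smul_set_eq_compl_of_even_orderOf {G : Type*} [Group G] {g : G}
    (hg : Even (orderOf g)) : ∃ A : Set G, g • A = Aᶜ := by
  -- Write `x = g ^ e x * r x` with `r` constant on the cosets `⟨g⟩x`; colour `x` by the parity
  -- of `e x`, which does not depend on the choice of `e x` because `orderOf g` is even.
  let r : G → G := fun x => (Quotient.mk (QuotientGroup.rightRel (Subgroup.zpowers g)) x).out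
  have hr : ∀ x, ∃ n : ℤ, g ^ n * r x = x := fun x => by
    obtain ⟨n, hn⟩ :=
      Subgroup.mem_zpowers_iff.1 (QuotientGroup.rightRel_apply.1 (Quotient.mk_out x))
    exact ⟨n, by rw [hn, inv_mul_cancel_right]⟩
  have hr_mul : ∀ x, r (g * x) = r x := fun x => by
    simp only [r]
    congr 1
    exact Quotient.sound (QuotientGroup.rightRel_apply.2 (by simp))
  choose e he using hr
  have hparity : ∀ x (n : ℤ), g ^ n * r x = x → (Even n ↔ Even (e x)) := fun x n hn => by
    have hdvd : (orderOf g : ℤ) ∣ n - e x :=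
      orderOf_dvd_sub_iff_zpow_eq_zpow.2 (mul_right_cancel (hn.trans (he x).symm))
    exact Int.even_sub.1 (even_iff_two_dvd.2
      ((Int.natCast_dvd_natCast.2 (even_iff_two_dvd.1 hg)).trans hdvd))
  refine ⟨{x | Even (e x)}, Set.ext fun y => ?_⟩
  have hry : r y = r (g⁻¹ * y) := by rw [← hr_mul (g⁻¹ * y), mul_inv_cancel_left]
  have hy : g ^ (e (g⁻¹ * y) + 1) * r y = y := by
    rw [hry, add_comm, zpow_add, zpow_one, mul_assoc, he, mul_inv_cancel_left]
  rw [Set.mem_smul_set_iff_inv_smul_mem, smul_eq_mul, Set.mem_compl_iff, Set.mem_ofPred,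
    Set.mem_ofPred, ← hparity y _ hy, Int.even_add_one, not_not]

section Invariant

variable {G : Type*} [Group G] {L : Set (Set G)}

theorem Invariant.smul_mem_iff (hL : Invariant L) (x : G) {A : Set G} : x • A ∈ L ↔ A ∈ L :=
  Iff.trans (by rw [show x • L = L from hL x]) Set.smul_mem_smul_set_iff

theorem invariant_of_forall_smul_mem (h : ∀ x : G, ∀ A ∈ L, x • A ∈ L) : Invariant L :=
  fun x => (Set.smul_set_subset_iff.2 (h x) : x • L ⊆ L).antisymm
    fun A hA => ⟨x⁻¹ • A, h _ _ hA, smul_inv_smul x A⟩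

theorem MaxLinked.odd_orderOf (hL : MaxLinked L) (hI : Invariant L) (g : G) :
    Odd (orderOf g) := by
  by_contra hg
  obtain ⟨A, hA⟩ := exists_smul_set_eq_compl_of_even_orderOf (Nat.not_odd_iff_even.1 hg)
  have hAc : g • Aᶜ = A := by rw [Set.smul_set_compl, hA, compl_compl]
  rcases (maxLinked_iff.1 hL).2 A with h | h
  · exact hL.1.compl_notMem_s8 h (hA ▸ (hI.smul_mem_iff g).2 h)
  · exact hL.1.compl_notMem_s8 (hAc ▸ (hI.smul_mem_iff g).2 h) h

theorem exists_maxInvLinked (G : Type*) [Group G] : ∃ L : Set (Set G), MaxInvLinked L := by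
  obtain ⟨L, hL⟩ := zorn_subset {L : Set (Set G) | Linked L ∧ Invariant L} fun c hc hc' => by
    refine ⟨⋃₀ c, ⟨?_, invariant_of_forall_smul_mem ?_⟩, fun _ => Set.subset_sUnion_of_mem⟩
    · rintro A ⟨M, hM, hAM⟩ B ⟨N, hN, hBN⟩
      rcases hc'.total hM hN with h | h
      · exact (hc hN).1 A (h hAM) B hBN
      · exact (hc hM).1 A hAM B (h hBN)
    · rintro x A ⟨M, hM, hAM⟩
      exact ⟨M, hM, ((hc hM).2.smul_mem_iff x).2 hAM⟩
  exact ⟨L, hL.prop.1, hL.prop.2,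
    fun L' hL' hI' hLL' => (hL.eq_of_subset ⟨hL', hI'⟩ hLL').symm⟩

namespace MaxInvLinked

theorem mem_of_mem_perp (hL : MaxInvLinked L) {A : Set G} (hA : A ∈ perp L)
    (hAA : ∀ u : G, (A ∩ u • A).Nonempty) : A ∈ L := by
  have hI := hL.2.1
  have hlinked : Linked (L ∪ Set.range fun x : G => x • A) := by
    refine hL.1.union ?_ ?_
    · rintro _ ⟨x, rfl⟩ _ ⟨y, rfl⟩
      dsimp only
      rw [← smul_inv_smul x (y • A), ← Set.smul_set_inter, smul_smul]
      exact (hAA _).smul_set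
    · rintro F hF _ ⟨x, rfl⟩
      dsimp only
      rw [← smul_inv_smul x F, ← Set.smul_set_inter, Set.inter_comm]
      exact (hA _ ((hI.smul_mem_iff x⁻¹).2 hF)).smul_set
  have hinv : Invariant (L ∪ Set.range fun x : G => x • A) := invariant_of_forall_smul_mem <| by
    rintro x F (hF | ⟨y, rfl⟩)
    · exact Or.inl ((hI.smul_mem_iff x).2 hF)
    · exact Or.inr ⟨x * y, mul_smul x y A⟩
  rw [← hL.2.2 _ hlinked hinv Set.subset_union_left]
  exact Or.inr ⟨1, one_smul G A⟩

theorem mem_of_mem_of_subset (hL : MaxInvLinked L) {A B : Set G} (hA : A ∈ L) (hAB : A ⊆ B) :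
    B ∈ L :=
  hL.mem_of_mem_perp (fun F hF => (hL.1 A hA F hF).mono (Set.inter_subset_inter_left F hAB))
    fun u => (hL.1 A hA _ ((hL.2.1.smul_mem_iff u).2 hA)).mono
      (Set.inter_subset_inter hAB (Set.smul_set_mono hAB))

theorem exists_disjoint_smul_set (hL : MaxInvLinked L) {A : Set G} (hA : A ∉ L)
    (hAc : Aᶜ ∉ L) :
    ∃ u : G, Disjoint A (u • A) := by
  by_contra! h
  refine hA (hL.mem_of_mem_perp (fun F hF => ?_)
    fun u => Set.not_disjoint_iff_nonempty_inter.1 (h u))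
  by_contra hAF
  exact hAc (hL.mem_of_mem_of_subset hF fun x hxF hxA => hAF ⟨x, hxA, hxF⟩)

theorem maxLinked (hodd : ∀ g : G, Odd (orderOf g)) (hL : MaxInvLinked L) : MaxLinked L := by
  refine maxLinked_iff.2 ⟨hL.1, fun A => ?_⟩
  by_contra! h
  obtain ⟨u, hu⟩ := hL.exists_disjoint_smul_set h.1 h.2
  obtain ⟨v, hv⟩ := hL.exists_disjoint_smul_set h.2 (by rw [compl_compl]; exact h.1)
  exact smul_set_ne_compl_of_odd_orderOf (hodd u) A
    (smul_set_eq_compl_of_disjoint (orderOf_pos_iff.1 (hodd _).pos) hu hv)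

end MaxInvLinked

end Invariant

theorem invariant_maxLinked_iff_odd {G : Type*} [Group G] :
    (∃ L : Set (Set G), MaxLinked L ∧ Invariant L) ↔ ∀ g : G, Odd (orderOf g) := by
  refine ⟨fun ⟨L, hL, hI⟩ => hL.odd_orderOf hI, fun hodd => ?_⟩
  obtain ⟨L, hL⟩ := exists_maxInvLinked G
  exact ⟨L, hL.maxLinked hodd, hL.2.1⟩
end

section
/- A maximal linked system Z on a group G is invariant (xZ = Z for all x ∈ G) if and only if Z is a right zero of the semigroup λ(G), i.e., A * Z = Z for every maximal linked system A on G. -/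
section LinkedSystems

variable {X : Type*} {L : Set (Set X)}

theorem Linked.empty_not_mem (h : Linked L) : (∅ : Set X) ∉ L := fun hmem ↦ by
  simpa using h ∅ hmem ∅ hmem

theorem Linked.insert_univ [Nonempty X] (h : Linked L) : Linked (insert Set.univ L) := by
  rintro A (rfl | hA) B (rfl | hB)
  · simp
  · simpa using h B hB B hB
  · simpa using h A hA A hA
  · exact h A hA B hB

theorem MaxLinked.univ_mem_s9 [Nonempty X] (h : MaxLinked L) : Set.univ ∈ L := by
  rw [← h.2 _ h.1.insert_univ (Set.subset_insert _ _)]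
  exact Set.mem_insert _ _

theorem maxLinked_setOf_mem (p : X) : MaxLinked {S : Set X | p ∈ S} := by
  refine ⟨fun A hA B hB ↦ ⟨p, hA, hB⟩, fun L' hL' hsub ↦ ?_⟩
  refine Set.Subset.antisymm (fun S hS ↦ ?_) hsub
  obtain ⟨y, hyS, rfl⟩ := hL' S hS {p} (hsub rfl)
  exact hyS

end LinkedSystems

section Translation

variable {G : Type*} [Group G] {Z : Set (Set G)}

theorem invariant_iff_forall_preimage_mem :
    Invariant Z ↔ ∀ (x : G) (S : Set G), (x * ·) ⁻¹' S ∈ Z ↔ S ∈ Z := by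
  refine forall_congr' fun x ↦ ?_
  have htranslate : Set.image (Set.image (x * ·)) = Set.preimage (Set.image (x⁻¹ * ·)) :=
    Set.image_eq_preimage_of_inverse
      (fun S ↦ by ext; simp) (fun S ↦ by ext; simp)
  rw [htranslate, Set.ext_iff]
  simp only [Set.mem_preimage, Set.image_mul_left', Iff.comm]

theorem conv_setOf_mem (x : G) :
    conv {S : Set G | x ∈ S} Z = {S | (x * ·) ⁻¹' S ∈ Z} :=
  rfl

theorem conv_eq_of_forall_preimage_mem {A : Set (Set G)} (hA : MaxLinked A)
    (hZ : ∀ (x : G) (S : Set G), (x * ·) ⁻¹' S ∈ Z ↔ S ∈ Z) : conv A Z = Z := by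
  ext S
  change {x : G | (x * ·) ⁻¹' S ∈ Z} ∈ A ↔ S ∈ Z
  have hconst : {x : G | (x * ·) ⁻¹' S ∈ Z} = {_x | S ∈ Z} := by simp only [hZ]
  by_cases hS : S ∈ Z
  · simpa [hconst, hS] using hA.univ_mem_s9
  · simpa [hconst, hS] using hA.1.empty_not_mem

end Translation

theorem invariant_iff_rightZero_general {G : Type*} [Group G] {Z : Set (Set G)} :
    Invariant Z ↔ ∀ A : Set (Set G), MaxLinked A → conv A Z = Z := by
  rw [invariant_iff_forall_preimage_mem]
  refine ⟨fun hZ A hA ↦ conv_eq_of_forall_preimage_mem hA hZ, fun h x S ↦ ?_⟩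
  have hx := h _ (maxLinked_setOf_mem x)
  rw [conv_setOf_mem] at hx
  exact Set.ext_iff.mp hx S

theorem invariant_iff_rightZero {G : Type*} [Group G] {Z : Set (Set G)}
    (hZ : MaxLinked Z) :
    Invariant Z ↔ ∀ A : Set (Set G), MaxLinked A → conv A Z = Z :=
  invariant_iff_rightZero_general
end

section
/- Let L₀ be a maximal invariant linked system on an abelian group G and A ∈ L₀⊥ \ L₀. Then there exists b ∈ G with A ∪ bA = G. -/
/-! A set `X` that meets every member of a maximal invariant linked family `L` and every
translate of itself lies in `L`: adjoining the orbit of `X` keeps `L` linked and invariant.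
If no translate `bA` covers the complement of `A`, then `Aᶜ` meets all its translates. It cannot
meet every member of `L₀` (it would then lie in `L₀`, disjoint from `A ∈ L₀⊥`), so some `F ∈ L₀`
lies in `A`; as `F` meets its translates, so does `A`, which forces `A ∈ L₀`. -/

open Set Pointwise

section
variable {G : Type*} [Group G] {L : Set (Set G)} {X F : Set G}

theorem Invariant.smul_mem (hL : Invariant L) (hF : F ∈ L) (g : G) : g • F ∈ L :=
  hL g ▸ mem_image_of_mem _ hF

theorem Invariant.union_range_smul (hL : Invariant L) (X : Set G) :
    Invariant (L ∪ range fun g : G => g • X) := by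
  intro x
  have hLx : (x • ·) '' L = L := hL x
  change (x • ·) '' (L ∪ range fun g : G => g • X) = L ∪ range fun g : G => g • X
  rw [image_union, hLx, ← range_comp]
  have hcomp : (x • ·) ∘ (fun g : G => g • X) = (fun g : G => g • X) ∘ (x * ·) :=
    funext fun g => smul_smul x g X
  rw [hcomp, (mul_left_surjective x).range_comp]

theorem Linked.union_range_smul (hL : Linked L) (hinv : Invariant L) (hX : X ∈ perp L)
    (hXX : ∀ c : G, (X ∩ c • X).Nonempty) : Linked (L ∪ range fun g : G => g • X) := by
  have translate_meets : ∀ g, ∀ F ∈ L, (g • X ∩ F).Nonempty := fun g F hF => by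
    simpa [smul_set_inter, smul_inv_smul] using (hX _ (hinv.smul_mem hF g⁻¹)).smul_set (a := g)
  rintro S (hS | ⟨g, rfl⟩) T (hT | ⟨h, rfl⟩)
  · exact hL S hS T hT
  · exact inter_comm S _ ▸ translate_meets h S hS
  · exact translate_meets g T hT
  · simpa [smul_set_inter, smul_smul] using (hXX (g⁻¹ * h)).smul_set (a := g)

theorem MaxInvLinked.mem_of_mem_perp_s15 (hL : MaxInvLinked L) (hX : X ∈ perp L)
    (hXX : ∀ c : G, (X ∩ c • X).Nonempty) : X ∈ L := by
  obtain ⟨hlinked, hinv, hmax⟩ := hL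
  rw [← hmax _ (Linked.union_range_smul hlinked hinv hX hXX) (Invariant.union_range_smul hinv X)
    subset_union_left]
  exact Or.inr ⟨1, one_smul G X⟩

theorem MaxInvLinked.inter_smul_nonempty (hL : MaxInvLinked L) (hF : F ∈ L) (c : G) :
    (F ∩ c • F).Nonempty :=
  hL.1 F hF _ (hL.2.1.smul_mem hF c)

theorem compl_inter_smul_compl_nonempty_iff {A : Set G} {c : G} :
    (Aᶜ ∩ c • Aᶜ).Nonempty ↔ A ∪ c • A ≠ univ := by
  rw [smul_set_compl, ← compl_union, nonempty_compl]

end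

theorem perp_diff_cover_shift {G : Type*} [CommGroup G] {L₀ : Set (Set G)}
    (hL₀ : MaxInvLinked L₀) {A : Set G} (hA : A ∈ perp L₀ \ L₀) :
    ∃ b : G, A ∪ (fun g => b * g) '' A = Set.univ := by
  obtain ⟨hAperp, hAnotin⟩ := hA
  by_contra! hcover
  have hcompl : ∀ c : G, (Aᶜ ∩ c • Aᶜ).Nonempty := fun c =>
    compl_inter_smul_compl_nonempty_iff.2 (hcover c)
  obtain ⟨F, hF, hFA⟩ : ∃ F ∈ L₀, F ⊆ A := by
    by_contra! hno
    refine (hAperp _ (hL₀.mem_of_mem_perp_s15 (fun F hF => ?_) hcompl)).ne_empty (inter_compl_self A)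
    obtain ⟨x, hxF, hxA⟩ := not_subset.1 (hno F hF)
    exact ⟨x, hxA, hxF⟩
  refine hAnotin (hL₀.mem_of_mem_perp_s15 hAperp fun c => ?_)
  exact (hL₀.inter_smul_nonempty hF c).mono (inter_subset_inter hFA (smul_set_mono hFA))
end

section
/- Let L₀ be a maximal invariant linked system on a group G. If A ∈ L₀⊥, then also G \ A ∈ L₀⊥ or A ∈ L₀. Equivalently, if A ∈ L₀⊥ \ L₀, then G \ A ∈ L₀⊥. -/
/-!
If `Aᶜ` misses some `F ∈ L₀`, then `F ⊆ A`, so every left translate of `A` contains a member of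
`L₀`. Adjoining all translates of `A` to `L₀` therefore keeps the family linked and invariant, and
maximality forces `A ∈ L₀`.
-/

theorem Linked.union_of_forall_exists_subset {X : Type*} {L M : Set (Set X)} (hL : Linked L)
    (hM : ∀ B ∈ M, ∃ F ∈ L, F ⊆ B) : Linked (L ∪ M) := by
  have hsub : ∀ B ∈ L ∪ M, ∃ F ∈ L, F ⊆ B := by
    rintro B (hB | hB)
    · exact ⟨B, hB, subset_rfl⟩
    · exact hM B hB
  intro A hA B hB
  obtain ⟨F, hF, hFA⟩ := hsub A hA
  obtain ⟨F', hF', hF'B⟩ := hsub B hB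
  exact (hL F hF F' hF').mono (Set.inter_subset_inter hFA hF'B)

section Invariant

variable {G : Type*} [Group G]

theorem Invariant.image_mem {L : Set (Set G)} (hL : Invariant L) (x : G) {S : Set G}
    (hS : S ∈ L) : (fun a => x * a) '' S ∈ L :=
  hL x ▸ Set.mem_image_of_mem _ hS

theorem Invariant.union {L M : Set (Set G)} (hL : Invariant L) (hM : Invariant M) :
    Invariant (L ∪ M) := by
  intro x
  rw [Set.image_union, hL x, hM x]

theorem invariant_range_image_mul_left (A : Set G) :
    Invariant (Set.range fun x : G => (fun a => x * a) '' A) := by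
  intro g
  rw [← Set.range_comp]
  simp only [Function.comp_def, Set.image_image, ← mul_assoc]
  exact (mul_left_surjective g).range_comp fun y => (fun a => y * a) '' A

theorem MaxInvLinked.mem_of_subset {L : Set (Set G)} (hL : MaxInvLinked L) {F A : Set G}
    (hF : F ∈ L) (hFA : F ⊆ A) : A ∈ L := by
  obtain ⟨hlink, hinv, hmax⟩ := hL
  set T := Set.range fun x : G => (fun a => x * a) '' A
  have hlinkT : Linked (L ∪ T) := hlink.union_of_forall_exists_subset <| by
    rintro _ ⟨x, rfl⟩
    exact ⟨_, hinv.image_mem x hF, Set.image_mono hFA⟩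
  have hLT : L ∪ T = L :=
    hmax _ hlinkT (hinv.union (invariant_range_image_mul_left A)) Set.subset_union_left
  exact hLT ▸ Or.inr ⟨1, by simp⟩

end Invariant

theorem compl_mem_perp_general {G : Type*} [Group G] {L₀ : Set (Set G)}
    (hL₀ : MaxInvLinked L₀) {A : Set G} (hA' : A ∉ L₀) :
    Aᶜ ∈ perp L₀ := by
  intro F hF
  by_contra hdisj
  rw [Set.inter_comm, Set.inter_compl_nonempty_iff, not_not] at hdisj
  exact hA' (hL₀.mem_of_subset hF hdisj)

theorem compl_mem_perp {G : Type*} [Group G] {L₀ : Set (Set G)}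
    (hL₀ : MaxInvLinked L₀) {A : Set G} (hA : A ∈ perp L₀) (hA' : A ∉ L₀) :
    Aᶜ ∈ perp L₀ :=
  compl_mem_perp_general hL₀ hA'
end
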